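/- arXiv:2306.15967 — 8 statements merged into one kernel-verified Lean document; each statement's English description precedes it below -/
import Mathlib

section
/- Let F be a k-CNF formula with an even number n of variables x_1,…,x_n and clauses c_1,…,c_m. Define X to be the set of m-dimensional 0/1 vectors x^α indexed by assignments α of x_1,…,x_{n/2}, where x^α_i = 0 iff α satisfies clause c_i, and Y the set of vectors y^β indexed by assignments β of x_{n/2+1},…,x_n with y^β_i = 0 iff β satisfies c_i. Then F is satisfiable if and only if there exist x ∈ X and y ∈ Y whose dot product (sum of coordinatewise products) is zero. -/
/-- SAT-to-OV reduction correctness.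
A k-CNF formula with clauses `c : Fin m → Finset (ℕ × Bool)` (literals are
variable/polarity pairs, variables `< n`, `n` even, each clause of size ≤ k)
is satisfiable iff the two vector families `X`, `Y` (indexed by partial
assignments of the first and second halves of the variables, with coordinate
`i` equal to `0` iff the partial assignment satisfies clause `c i`) contain an
orthogonal pair. -/
theorem stmt_0 (n m k : ℕ) (hn : Even n)
    (c : Fin m → Finset (ℕ × Bool))
    (hvars : ∀ i, ∀ l ∈ c i, l.1 < n)
    (hk : ∀ i, (c i).card ≤ k)
    (X Y : (ℕ → Bool) → Fin m → ℕ)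
    (hX : ∀ α i, X α i = if ∃ l ∈ c i, l.1 < n / 2 ∧ α l.1 = l.2 then 0 else 1)
    (hY : ∀ β i, Y β i = if ∃ l ∈ c i, n / 2 ≤ l.1 ∧ l.1 < n ∧ β l.1 = l.2 then 0 else 1) :
    (∃ γ : ℕ → Bool, ∀ i, ∃ l ∈ c i, γ l.1 = l.2) ↔
      (∃ α β : ℕ → Bool, ∀ i, X α i * Y β i = 0) := by
  constructor
  · rintro ⟨γ, hγ⟩
    refine ⟨γ, γ, fun i => ?_⟩
    obtain ⟨l, hl, hsat⟩ := hγ i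
    rcases lt_or_ge l.1 (n / 2) with h | h
    · have hcond : ∃ l ∈ c i, l.1 < n / 2 ∧ γ l.1 = l.2 := ⟨l, hl, h, hsat⟩
      rw [hX, if_pos hcond, zero_mul]
    · have hcond : ∃ l ∈ c i, n / 2 ≤ l.1 ∧ l.1 < n ∧ γ l.1 = l.2 :=
        ⟨l, hl, h, hvars i l hl, hsat⟩
      rw [hY, if_pos hcond, mul_zero]
  · rintro ⟨α, β, h⟩
    refine ⟨fun x => if x < n / 2 then α x else β x, fun i => ?_⟩
    have hi := h i
    rw [hX, hY] at hi
    by_cases h1 : ∃ l ∈ c i, l.1 < n / 2 ∧ α l.1 = l.2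
    · obtain ⟨l, hl, hlt, hsat⟩ := h1
      exact ⟨l, hl, by simp [hlt, hsat]⟩
    · rw [if_neg h1, one_mul] at hi
      by_cases h2 : ∃ l ∈ c i, n / 2 ≤ l.1 ∧ l.1 < n ∧ β l.1 = l.2
      · obtain ⟨l, hl, hge, _, hsat⟩ := h2
        exact ⟨l, hl, by simp [Nat.not_lt.mpr hge, hsat]⟩
      · rw [if_neg h2] at hi; exact absurd hi one_ne_zero
end

section
/- Let U = (V,E) be an undirected graph on vertices x_1,…,x_n. Construct the directed edge-labeled graph D with vertices {v_s, v_z, v_t} ∪ {a_i, b_i, c_i, d_i : 1 ≤ i ≤ n} and edges: v_s →( a_1; a_i →( a_{i+1} for 1 ≤ i ≤ n−1; a_i →( b_j and b_i →) c_j and c_i →( d_j whenever {x_i,x_j} ∈ E; d_i →) d_{i−1} for 2 ≤ i ≤ n; d_1 →) v_z; v_z →) v_t. Then there exists a directed path from v_s to v_t whose edge-label concatenation is a balanced Dyck-1 word if and only if U contains a triangle. -/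
/-- Vertices of the reduction graph `D`. -/
inductive V3 (n : ℕ) where
  | vs | vz | vt
  | a (i : Fin n) | b (i : Fin n) | c (i : Fin n) | d (i : Fin n)

/-- Labeled edges of `D` (labels: `true` = '(' , `false` = ')').
`E` is the (symmetric) adjacency relation of the undirected graph `U`. -/
inductive Edge3 {n : ℕ} (E : Fin n → Fin n → Prop) : V3 n → Bool → V3 n → Prop
  | vs_a (i : Fin n) : i.val = 0 → Edge3 E .vs true (.a i)
  | a_a (i j : Fin n) : j.val = i.val + 1 → Edge3 E (.a i) true (.a j)
  | a_b (i j : Fin n) : E i j → Edge3 E (.a i) true (.b j)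
  | b_c (i j : Fin n) : E i j → Edge3 E (.b i) false (.c j)
  | c_d (i j : Fin n) : E i j → Edge3 E (.c i) true (.d j)
  | d_d (i j : Fin n) : i.val = j.val + 1 → Edge3 E (.d i) false (.d j)
  | d_vz (i : Fin n) : i.val = 0 → Edge3 E (.d i) false .vz
  | vz_vt : Edge3 E .vz false .vt

/-- Labeled directed paths: `PathWord R u v w` means there is a directed path
from `u` to `v` whose edge labels spell the word `w`. -/
inductive PathWord {V σ : Type*} (R : V → σ → V → Prop) : V → V → List σ → Prop
  | nil (v : V) : PathWord R v v []
  | cons {u v w : V} {l : σ} {ls : List σ} :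
      R u l v → PathWord R v w ls → PathWord R u w (l :: ls)

/-- Dyck-1 balancedness (labels: `true` = '(' , `false` = ')'). -/
def isDyck1 (w : List Bool) : Prop :=
  (∀ p : List Bool, p <+: w → p.count false ≤ p.count true) ∧
    w.count true = w.count false

section helpers
variable {n : ℕ} {E : Fin n → Fin n → Prop}

lemma pw_append {V σ : Type*} {R : V → σ → V → Prop} {u v x : V} {w1 w2 : List σ}
    (h1 : PathWord R u v w1) (h2 : PathWord R v x w2) : PathWord R u x (w1 ++ w2) := by
  induction h1 with
  | nil => simpa
  | cons e _ ih => exact .cons e (ih h2)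

lemma vz_lem {w} (h : PathWord (Edge3 E) V3.vz V3.vt w) : w = [false] := by
  cases h with
  | cons e h2 =>
    cases e
    cases h2 with
    | nil => rfl
    | cons e2 _ => cases e2

lemma d_lem : ∀ {u v : V3 n} {w}, PathWord (Edge3 E) u v w → v = V3.vt →
    ∀ l : Fin n, u = V3.d l → w = List.replicate (l.val + 2) false := by
  intro u v w h
  induction h with
  | nil => intro hv l hu; subst hv; cases hu
  | cons e h2 ih =>
    intro hv l hu
    subst hu
    cases e with
    | d_d i j hij =>
      rw [ih hv j rfl, hij]
      rfl
    | d_vz i h0 =>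
      subst hv
      rw [vz_lem h2, h0]
      rfl

lemma c_lem {w} {k : Fin n} (h : PathWord (Edge3 E) (V3.c k) V3.vt w) :
    ∃ l : Fin n, E k l ∧ w = true :: List.replicate (l.val + 2) false := by
  cases h with
  | cons e h2 =>
    cases e with
    | c_d i j hij => exact ⟨j, hij, by rw [d_lem h2 rfl j rfl]⟩

lemma b_lem {w} {j : Fin n} (h : PathWord (Edge3 E) (V3.b j) V3.vt w) :
    ∃ k l : Fin n, E j k ∧ E k l ∧
      w = false :: true :: List.replicate (l.val + 2) false := by
  cases h with
  | cons e h2 =>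
    cases e with
    | b_c i k hik =>
      obtain ⟨l, hl, hw⟩ := c_lem h2
      exact ⟨k, l, hik, hl, by rw [hw]⟩

lemma a_lem : ∀ {u v : V3 n} {w}, PathWord (Edge3 E) u v w → v = V3.vt →
    ∀ i : Fin n, u = V3.a i →
    ∃ (m : ℕ) (i' j k l : Fin n), i'.val = i.val + m ∧ E i' j ∧ E j k ∧ E k l ∧
      w = List.replicate m true ++
        true :: false :: true :: List.replicate (l.val + 2) false := by
  intro u v w h
  induction h with
  | nil => intro hv i hu; subst hv; cases hu
  | cons e h2 ih =>
    intro hv i hu; subst hu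
    cases e with
    | a_a i j hij =>
      obtain ⟨m, i', j', k, l, h1, hE1, hE2, hE3, hw⟩ := ih hv j rfl
      exact ⟨m + 1, i', j', k, l, by omega, hE1, hE2, hE3, by rw [hw]; rfl⟩
    | a_b i j hij =>
      obtain ⟨k, l, hk, hl, hw⟩ := b_lem (hv ▸ h2)
      exact ⟨0, i, j, k, l, by omega, hij, hk, hl, by rw [hw]; rfl⟩

lemma chain_d : ∀ (m : ℕ) (l : Fin n), l.val = m →
    PathWord (Edge3 E) (V3.d l) V3.vt (List.replicate (m + 2) false) := by
  intro m
  induction m with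
  | zero => intro l hl; exact .cons (.d_vz l hl) (.cons .vz_vt (.nil _))
  | succ m ih =>
    intro l hl
    have hm : m < n := by omega
    exact .cons (.d_d l ⟨m, hm⟩ (by simp [hl])) (ih ⟨m, hm⟩ rfl)

lemma chain_a : ∀ (m : ℕ) (i : Fin n), i.val = m →
    PathWord (Edge3 E) V3.vs (V3.a i) (List.replicate (m + 1) true) := by
  intro m
  induction m with
  | zero => intro i hi; exact .cons (.vs_a i hi) (.nil _)
  | succ m ih =>
    intro i hi
    have hm : m < n := by omega
    have h := pw_append (ih ⟨m, hm⟩ rfl)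
      (.cons (.a_a ⟨m, hm⟩ i (by simp [hi])) (.nil _))
    have : List.replicate (m + 1 + 1) true = List.replicate (m + 1) true ++ [true] := by
      rw [List.replicate_succ' (n := m+1)]
    rw [this]
    exact h

lemma prefix_append_cases {α : Type*} : ∀ {l1 : List α} {p l2 : List α}, p <+: l1 ++ l2 →
    p <+: l1 ∨ ∃ q, p = l1 ++ q ∧ q <+: l2 := by
  intro l1
  induction l1 with
  | nil => intro p l2 h; exact Or.inr ⟨p, rfl, h⟩
  | cons x l1 ih =>
    intro p l2 h
    cases p with
    | nil => exact Or.inl (List.nil_prefix)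
    | cons y p =>
      rw [List.cons_append, List.cons_prefix_cons] at h
      obtain ⟨rfl, h⟩ := h
      rcases ih h with h1 | ⟨q, rfl, hq⟩
      · exact Or.inl (List.cons_prefix_cons.mpr ⟨rfl, h1⟩)
      · exact Or.inr ⟨q, rfl, hq⟩

lemma dyck_shape (a : ℕ) (ha : 1 ≤ a) :
    (∀ p : List Bool, p <+: (List.replicate a true ++ false :: true :: List.replicate a false) →
      p.count false ≤ p.count true) := by
  intro p hp
  rcases prefix_append_cases hp with h1 | ⟨q, rfl, hq⟩
  · have : p.count false = 0 := by
      rw [List.count_eq_zero]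
      intro hf
      have := List.eq_of_mem_replicate (h1.subset hf)
      simp at this
    omega
  · have hct : (List.replicate a true ++ q).count true = a + q.count true := by
      simp [List.count_append, List.count_replicate]
    have hcf : (List.replicate a true ++ q).count false = q.count false := by
      simp [List.count_append, List.count_replicate]
    rw [hct, hcf]
    cases q with
    | nil => simp
    | cons x q2 =>
      rw [List.cons_prefix_cons] at hq
      obtain ⟨rfl, hq⟩ := hq
      cases q2 with
      | nil => simpa using ha
      | cons y q3 =>
        rw [List.cons_prefix_cons] at hq
        obtain ⟨rfl, hq⟩ := hq
        have h1 : q3.count false ≤ a := by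
          calc q3.count false ≤ q3.length := List.count_le_length
          _ ≤ (List.replicate a false).length := hq.length_le
          _ = a := by simp
        simp only [List.count_cons]
        simp
        omega

end helpers

/-- in the graph `D` built from an undirected graph `U` there is
a path from `v_s` to `v_t` spelling a Dyck-1 word iff `U` contains a triangle. -/
theorem stmt_3 (n : ℕ) (E : Fin n → Fin n → Prop)
    (hsym : ∀ i j, E i j → E j i) (hirr : ∀ i, ¬ E i i) :
    (∃ w : List Bool, PathWord (Edge3 E) .vs .vt w ∧ isDyck1 w) ↔
      (∃ i j k : Fin n, i ≠ j ∧ j ≠ k ∧ i ≠ k ∧ E i j ∧ E j k ∧ E i k) := by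
  constructor
  · rintro ⟨w, hp, hd⟩
    cases hp with
    | cons e h2 =>
      cases e with
      | vs_a i h0 =>
        obtain ⟨m, i', j, k, l, h1, hEij, hEjk, hEkl, hw⟩ := a_lem h2 rfl i rfl
        subst hw
        have hc := hd.2
        simp [List.count_cons, List.count_append, List.count_replicate] at hc
        have hli : l = i' := Fin.ext (by omega)
        have hEki : E k i' := hli ▸ hEkl
        refine ⟨i', j, k, ?_, ?_, ?_, hEij, hEjk, hsym _ _ hEki⟩
        · rintro rfl; exact hirr _ hEij
        · rintro rfl; exact hirr _ hEjk
        · rintro rfl; exact hirr _ hEki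
  · rintro ⟨i, j, k, hij, hjk, hik, hEij, hEjk, hEik⟩
    refine ⟨List.replicate (i.val + 2) true ++
      false :: true :: List.replicate (i.val + 2) false, ?_, ?_, ?_⟩
    · have hpath : PathWord (Edge3 E) V3.vs V3.vt
          ((List.replicate (i.val + 1) true ++ [true]) ++
            false :: true :: List.replicate (i.val + 2) false) := by
        refine pw_append (pw_append (chain_a i.val i rfl) (.cons (.a_b i j hEij) (.nil _))) ?_
        exact .cons (.b_c j k hEjk) (.cons (.c_d k i (hsym _ _ hEik)) (chain_d i.val i rfl))
      rwa [← List.replicate_succ' (n := i.val + 1)] at hpath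
    · exact dyck_shape (i.val + 2) (by omega)
    · simp [List.count_append, List.count_replicate, List.count_cons]
end

section
/- The graph D in the triangle-detection-to-Dyck-1 reduction is acyclic: it contains no directed cycle. -/
def rank3 {n : ℕ} : V3 n → ℕ
  | .vs => 0
  | .a i => 1 + i.val
  | .b _ => n + 2
  | .c _ => n + 3
  | .d i => n + 4 + (n - 1 - i.val)
  | .vz => 2 * n + 4
  | .vt => 2 * n + 5

theorem rank3_lt {n : ℕ} {E : Fin n → Fin n → Prop} {u v : V3 n} {l : Bool}
    (h : Edge3 E u l v) : rank3 u < rank3 v := by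
  cases h with
  | vs_a i _ => simp [rank3]
  | a_a i j hj => simp [rank3, hj]
  | a_b i j _ => have := i.isLt; simp [rank3]; omega
  | b_c i j _ => simp [rank3]
  | c_d i j _ => simp [rank3]; omega
  | d_d i j hij => have := i.isLt; simp [rank3]; omega
  | d_vz i _ => have := i.isLt; simp [rank3]; omega
  | vz_vt => simp [rank3]

theorem rank3_path {n : ℕ} {E : Fin n → Fin n → Prop} {u v : V3 n} {w : List Bool}
    (h : PathWord (Edge3 E) u v w) : rank3 u ≤ rank3 v := by
  induction h with
  | nil => exact le_refl _
  | cons he _ ih => exact le_of_lt (lt_of_lt_of_le (rank3_lt he) ih)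

/-- the graph `D` of the triangle-detection-to-Dyck-1 reduction
contains no directed cycle (no nonempty path from a vertex to itself). -/
theorem stmt_5 (n : ℕ) (E : Fin n → Fin n → Prop) :
    ¬ ∃ (v : V3 n) (w : List Bool), w ≠ [] ∧ PathWord (Edge3 E) v v w := by
  rintro ⟨v, w, hw, hp⟩
  cases hp with
  | nil => exact hw rfl
  | cons he hrest =>
    exact absurd (lt_of_lt_of_le (rank3_lt he) (rank3_path hrest)) (lt_irrefl _)
end

section
/- In the triangle-detection push-down system P built from an undirected graph U on n vertices, the configuration (q_t, ε) is reachable from (q_s, ε) in the configuration graph of P if and only if U contains a triangle. -/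
/-- States of the triangle-detection push-down system. -/
inductive Q9 (n : ℕ) where
  | qs | qt
  | a (i : Fin n) | b (i : Fin n) | c (i : Fin n) | d (i : Fin n)

/-- The `⌈log₂ n⌉`-bit binary encoding of `m` as a stack word. -/
def enc (n m : ℕ) : List Bool := (List.range (Nat.clog 2 n)).map m.testBit

/-- One move in the configuration graph of the PDS `P` built from the graph
with adjacency relation `E` (a configuration is a state with a stack word,
topmost symbol first): from `q_s` push `[i]₂` and go to `a i`; move along the
edges of `U` through `b`, `c` to `d` without touching the stack; from `d i`
pop `[i]₂` and go to `q_t`. -/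
inductive Step9 {n : ℕ} (E : Fin n → Fin n → Prop) :
    Q9 n × List Bool → Q9 n × List Bool → Prop
  | push (i : Fin n) (s : List Bool) :
      Step9 E (.qs, s) (.a i, enc n i.val ++ s)
  | ab (i j : Fin n) (s : List Bool) : E i j → Step9 E (.a i, s) (.b j, s)
  | bc (i j : Fin n) (s : List Bool) : E i j → Step9 E (.b i, s) (.c j, s)
  | cd (i j : Fin n) (s : List Bool) : E i j → Step9 E (.c i, s) (.d j, s)
  | pop (i : Fin n) (s : List Bool) :
      Step9 E (.d i, enc n i.val ++ s) (.qt, s)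

lemma enc_inj {n : ℕ} {i l : Fin n} (h : enc n i.val = enc n l.val) : i = l := by
  have hn : n ≤ 2 ^ Nat.clog 2 n := Nat.le_pow_clog one_lt_two n
  refine Fin.ext (Nat.eq_of_testBit_eq fun k => ?_)
  by_cases hk : k < Nat.clog 2 n
  · have hk' := congrArg (fun L : List Bool => L[k]?) h
    simpa [enc, List.getElem?_map, List.getElem?_range, hk] using hk'
  · push_neg at hk
    have hp : 2 ^ Nat.clog 2 n ≤ 2 ^ k := Nat.pow_le_pow_right (by norm_num) hk
    have h1 : i.val < 2 ^ k := lt_of_lt_of_le (lt_of_lt_of_le i.isLt hn) hp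
    have h2 : l.val < 2 ^ k := lt_of_lt_of_le (lt_of_lt_of_le l.isLt hn) hp
    rw [Nat.testBit_lt_two_pow h1, Nat.testBit_lt_two_pow h2]

lemma qt_stuck {n : ℕ} {E : Fin n → Fin n → Prop} {s : List Bool}
    {c : Q9 n × List Bool}
    (h : Relation.ReflTransGen (Step9 E) (Q9.qt, s) c) : c = (Q9.qt, s) := by
  induction h with
  | refl => rfl
  | tail _ hstep ih => rw [ih] at hstep; cases hstep

/-- in the triangle-detection PDS, the configuration `(q_t, ε)`
is reachable from `(q_s, ε)` iff the underlying undirected graph `U` contains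
a triangle. -/
theorem stmt_9 (n : ℕ) (E : Fin n → Fin n → Prop)
    (hsym : ∀ i j, E i j → E j i) (hirr : ∀ i, ¬ E i i) :
    Relation.ReflTransGen (Step9 E) (.qs, []) (.qt, []) ↔
      (∃ i j k : Fin n, i ≠ j ∧ j ≠ k ∧ i ≠ k ∧ E i j ∧ E j k ∧ E i k) := by
  constructor
  · intro h
    rcases h.cases_head with heq | ⟨c1, hs1, h1⟩
    · simp at heq
    cases hs1 with
    | push i =>
    rcases h1.cases_head with heq | ⟨c2, hs2, h2⟩
    · simp at heq
    cases hs2 with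
    | ab _ j _ hij =>
    rcases h2.cases_head with heq | ⟨c3, hs3, h3⟩
    · simp at heq
    cases hs3 with
    | bc _ k _ hjk =>
    rcases h3.cases_head with heq | ⟨c4, hs4, h4⟩
    · simp at heq
    cases hs4 with
    | cd _ l _ hkl =>
    rcases h4.cases_head with heq | ⟨c5, hs5, h5⟩
    · simp at heq
    generalize henc : enc n i.val ++ [] = w at hs5
    cases hs5 with
    | pop _ s =>
    have hs := qt_stuck h5
    have hsnil : s = [] := (Prod.mk.injEq _ _ _ _ ▸ hs).2.symm
    subst hsnil
    have : enc n i.val = enc n l.val := by simpa using henc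
    have hil : i = l := enc_inj this
    subst hil
    exact ⟨i, j, k, fun e => hirr j (e ▸ hij), fun e => hirr k (e ▸ hjk),
      fun e => hirr k (e ▸ hsym k i hkl), hij, hjk, hsym _ _ hkl⟩
  · rintro ⟨i, j, k, _, _, _, hij, hjk, hik⟩
    exact .head (.push i []) (.head (.ab i j _ hij) (.head (.bc j k _ hjk)
      (.head (.cd k i _ (hsym _ _ hik)) (.head (.pop i []) .refl))))
end

section
/- In the AE-MonoΔ push-down system P built from an edge-colored undirected graph U on vertices v_1,…,v_n with color function c, for every pair (i,j): state y'_j is reachable from state x_i with empty stack at both ends if and only if U contains a monochromatic triangle through the edge e_{ij}, i.e. a vertex k with edges e_{ij}, e_{jk}, e_{ki} all present and c(e_{ij}) = c(e_{jk}) = c(e_{ki}). -/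
/-- States of the AE-MonoΔ push-down system. -/
inductive Q10 (n : ℕ) where
  | x (i : Fin n) | y (i : Fin n) | z (i : Fin n)
  | x' (i : Fin n) | y' (i : Fin n)

/-- The `⌈log₂ n⌉`-bit binary encoding of a vertex index. -/
def encV (n m : ℕ) : List Bool := (List.range (Nat.clog 2 n)).map m.testBit

/-- The `2⌈log₂ n⌉`-bit binary encoding of a color. -/
def encC (n m : ℕ) : List Bool := (List.range (2 * Nat.clog 2 n)).map m.testBit

/-- One move in the configuration graph of the AE-MonoΔ PDS built from the
edge-colored graph `(E, c)` (configurations are state/stack pairs, topmost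
stack symbol first): `x i → y j` pushes `[c(e_ij)]₂` then `[j]₂` then `[i]₂`
under it; `y i → z j` pops and re-pushes `[c(e_ij)]₂`; `z i → x' j` pops
`[c(e_ij)]₂`; `x' i → y' j` pops `[j]₂` then `[i]₂`. -/
inductive Step10 {n : ℕ} (E : Fin n → Fin n → Prop) (c : Fin n → Fin n → ℕ) :
    Q10 n × List Bool → Q10 n × List Bool → Prop
  | xy (i j : Fin n) (s : List Bool) : E i j →
      Step10 E c (.x i, s) (.y j, encC n (c i j) ++ encV n j.val ++ encV n i.val ++ s)
  | yz (i j : Fin n) (s : List Bool) : E i j →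
      Step10 E c (.y i, encC n (c i j) ++ s) (.z j, encC n (c i j) ++ s)
  | zx' (i j : Fin n) (s : List Bool) : E i j →
      Step10 E c (.z i, encC n (c i j) ++ s) (.x' j, s)
  | x'y' (i j : Fin n) (s : List Bool) : E i j →
      Step10 E c (.x' i, encV n j.val ++ encV n i.val ++ s) (.y' j, s)

lemma enc_inj_aux {L a b : ℕ} (ha : a < 2 ^ L) (hb : b < 2 ^ L)
    (h : (List.range L).map a.testBit = (List.range L).map b.testBit) : a = b := by
  apply Nat.eq_of_testBit_eq
  intro k
  by_cases hk : k < L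
  · have h2 : ((List.range L).map a.testBit)[k]'(by simpa using hk) =
        ((List.range L).map b.testBit)[k]'(by simpa using hk) := by simp only [h]
    simpa using h2
  · have hL : 2 ^ L ≤ 2 ^ k := Nat.pow_le_pow_right (by norm_num) (le_of_not_gt hk)
    rw [Nat.testBit_lt_two_pow (lt_of_lt_of_le ha hL),
      Nat.testBit_lt_two_pow (lt_of_lt_of_le hb hL)]

lemma encV_inj {n a b : ℕ} (ha : a < n) (hb : b < n) (h : encV n a = encV n b) : a = b :=
  enc_inj_aux (lt_of_lt_of_le ha (Nat.le_pow_clog one_lt_two n))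
    (lt_of_lt_of_le hb (Nat.le_pow_clog one_lt_two n)) h

lemma encC_inj {n a b : ℕ} (ha : a < n ^ 2) (hb : b < n ^ 2) (h : encC n a = encC n b) :
    a = b := by
  have hn : n ^ 2 ≤ 2 ^ (2 * Nat.clog 2 n) := by
    calc n ^ 2 ≤ (2 ^ Nat.clog 2 n) ^ 2 :=
          Nat.pow_le_pow_left (Nat.le_pow_clog one_lt_two n) 2
    _ = 2 ^ (2 * Nat.clog 2 n) := by rw [← pow_mul, mul_comm]
  exact enc_inj_aux (lt_of_lt_of_le ha hn) (lt_of_lt_of_le hb hn) h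

lemma encC_append_inj {n a b : ℕ} {s t : List Bool} (h : encC n a ++ s = encC n b ++ t) :
    encC n a = encC n b ∧ s = t :=
  List.append_inj h (by simp [encC])

lemma encV_append_inj {n a b : ℕ} {s t : List Bool} (h : encV n a ++ s = encV n b ++ t) :
    encV n a = encV n b ∧ s = t :=
  List.append_inj h (by simp [encV])


lemma step_from_x {n : ℕ} {E : Fin n → Fin n → Prop} {c : Fin n → Fin n → ℕ}
    {a : Fin n} {st : List Bool} {p : Q10 n × List Bool}
    (h : Step10 E c (.x a, st) p) :
    ∃ b, E a b ∧ p = (.y b, encC n (c a b) ++ encV n b.val ++ encV n a.val ++ st) := by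
  cases h with
  | xy i j s hE => exact ⟨j, hE, rfl⟩

lemma step_from_y {n : ℕ} {E : Fin n → Fin n → Prop} {c : Fin n → Fin n → ℕ}
    {a : Fin n} {st : List Bool} {p : Q10 n × List Bool}
    (h : Step10 E c (.y a, st) p) :
    ∃ b s, E a b ∧ st = encC n (c a b) ++ s ∧ p = (.z b, encC n (c a b) ++ s) := by
  cases h with
  | yz i j s hE => exact ⟨j, s, hE, rfl, rfl⟩

lemma step_from_z {n : ℕ} {E : Fin n → Fin n → Prop} {c : Fin n → Fin n → ℕ}
    {a : Fin n} {st : List Bool} {p : Q10 n × List Bool}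
    (h : Step10 E c (.z a, st) p) :
    ∃ b s, E a b ∧ st = encC n (c a b) ++ s ∧ p = (.x' b, s) := by
  cases h with
  | zx' i j s hE => exact ⟨j, s, hE, rfl, rfl⟩

lemma step_from_x' {n : ℕ} {E : Fin n → Fin n → Prop} {c : Fin n → Fin n → ℕ}
    {a : Fin n} {st : List Bool} {p : Q10 n × List Bool}
    (h : Step10 E c (.x' a, st) p) :
    ∃ b s, E a b ∧ st = encV n b.val ++ encV n a.val ++ s ∧ p = (.y' b, s) := by
  cases h with
  | x'y' i j s hE => exact ⟨j, s, hE, rfl, rfl⟩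

lemma step_from_y' {n : ℕ} {E : Fin n → Fin n → Prop} {c : Fin n → Fin n → ℕ}
    {a : Fin n} {st : List Bool} {p : Q10 n × List Bool}
    (h : Step10 E c (.y' a, st) p) : False := by
  cases h

lemma rtg_from_y' {n : ℕ} {E : Fin n → Fin n → Prop} {c : Fin n → Fin n → ℕ}
    {a : Fin n} {st : List Bool} {p : Q10 n × List Bool}
    (h : Relation.ReflTransGen (Step10 E c) (.y' a, st) p) : p = (.y' a, st) := by
  rw [Relation.ReflTransGen.cases_head_iff] at h
  rcases h with h | ⟨q, hq, -⟩
  · exact h.symm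
  · exact absurd hq step_from_y'

/-- in the AE-MonoΔ PDS built from an edge-colored graph
(symmetric adjacency `E`, symmetric coloring `c` with colors `< n²`), for
every pair `(i, j)` the configuration `(y'_j, ε)` is reachable from
`(x_i, ε)` iff there is a monochromatic triangle through the edge `e_ij`. -/
theorem stmt_10 (n : ℕ) (E : Fin n → Fin n → Prop) (c : Fin n → Fin n → ℕ)
    (hsym : ∀ i j, E i j → E j i) (hcsym : ∀ i j, c i j = c j i)
    (hcol : ∀ i j, c i j < n ^ 2) (i j : Fin n) :
    Relation.ReflTransGen (Step10 E c) (.x i, []) (.y' j, []) ↔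
      (E i j ∧ ∃ k : Fin n, E j k ∧ E k i ∧
        c i j = c j k ∧ c j k = c k i) := by
  constructor
  · intro h
    rw [Relation.ReflTransGen.cases_head_iff] at h
    rcases h with h | ⟨p1, h1, h⟩
    · simp at h
    obtain ⟨a, hEia, rfl⟩ := step_from_x h1
    rw [Relation.ReflTransGen.cases_head_iff] at h
    rcases h with h | ⟨p2, h2, h⟩
    · simp at h
    obtain ⟨b, s2, hEab, heq2, rfl⟩ := step_from_y h2
    simp only [List.append_assoc, List.append_nil] at heq2
    obtain ⟨hc2, hs2⟩ := encC_append_inj heq2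
    have hcab : c a b = c i a := (encC_inj (hcol _ _) (hcol _ _) hc2).symm
    rw [Relation.ReflTransGen.cases_head_iff] at h
    rcases h with h | ⟨p3, h3, h⟩
    · simp at h
    obtain ⟨d, s3, hEbd, heq3, rfl⟩ := step_from_z h3
    obtain ⟨hc3, hs3⟩ := encC_append_inj heq3
    have hcbd : c b d = c a b := (encC_inj (hcol _ _) (hcol _ _) hc3).symm
    rw [Relation.ReflTransGen.cases_head_iff] at h
    rcases h with h | ⟨p4, h4, h⟩
    · simp at h
    obtain ⟨m, s4, hEdm, heq4, rfl⟩ := step_from_x' h4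
    simp only [List.append_assoc] at heq4
    rw [← hs3, ← hs2] at heq4
    obtain ⟨hv1, heq4'⟩ := encV_append_inj heq4
    obtain ⟨hv2, hs4⟩ := encV_append_inj (t := s4) (s := ([] : List Bool))
      (by simpa using heq4')
    have hma : m = a := Fin.ext (encV_inj m.isLt a.isLt hv1.symm)
    have hdi : d = i := Fin.ext (encV_inj d.isLt i.isLt hv2.symm)
    have hfin := rtg_from_y' h
    have h5 : (Q10.y' j : Q10 n) = Q10.y' m := congrArg Prod.fst hfin
    have haj : a = j := by
      injection h5 with h6
      rw [h6, hma]
    refine ⟨?_, b, ?_, ?_, ?_, ?_⟩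
    · rw [← haj]; exact hEia
    · rw [← haj]; exact hEab
    · rw [← hdi]; exact hEbd
    · rw [← haj]; exact hcab.symm
    · rw [← haj, ← hdi]; exact hcbd.symm
  · rintro ⟨hEij, k, hEjk, hEki, h1, h2⟩
    have hki : c k i = c i j := by rw [h1, h2]
    have step1 : Step10 E c (.x i, [])
        (.y j, encC n (c i j) ++ (encV n j.val ++ encV n i.val)) := by
      simpa [List.append_assoc] using Step10.xy (c := c) i j [] hEij
    have step2 : Step10 E c (.y j, encC n (c i j) ++ (encV n j.val ++ encV n i.val))
        (.z k, encC n (c i j) ++ (encV n j.val ++ encV n i.val)) := by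
      rw [h1]; exact Step10.yz j k _ hEjk
    have step3 : Step10 E c (.z k, encC n (c i j) ++ (encV n j.val ++ encV n i.val))
        (.x' i, encV n j.val ++ encV n i.val) := by
      rw [← hki]; exact Step10.zx' k i _ hEki
    have step4 : Step10 E c (.x' i, encV n j.val ++ encV n i.val) (.y' j, []) := by
      simpa using Step10.x'y' i j [] hEij
    exact .head step1 (.head step2 (.head step3 (.single step4)))
end

section
/- Let G = (N, Σ, P, S) be a context-free grammar in Chomsky normal form. Define G' = (N ∪ {E}, Σ ∪ {ε'}, P', S) where P' adds the productions E → ε' and, for every A ∈ N, A → EA and A → AE. Then for every word u over Σ ∪ {ε'}: u ∈ L(G') if and only if the word obtained from u by deleting all occurrences of ε' lies in L(G) (and u contains at least one symbol if the deletion is nontrivial, with the convention that derivations from S are used). -/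
/-- Sentential forms over terminals `T` and nonterminals `N`:
`Sum.inl` = terminal, `Sum.inr` = nonterminal. -/
abbrev GSym (T N : Type) := T ⊕ N

/-- One rewriting step using a rule from `R`. -/
def Produces {T N : Type} (R : Set (N × List (GSym T N)))
    (u v : List (GSym T N)) : Prop :=
  ∃ r ∈ R, ∃ p q : List (GSym T N),
    u = p ++ [Sum.inr r.1] ++ q ∧ v = p ++ r.2 ++ q

/-- Derivation: reflexive-transitive closure of rewriting. -/
def Derives {T N : Type} (R : Set (N × List (GSym T N))) :
    List (GSym T N) → List (GSym T N) → Prop :=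
  Relation.ReflTransGen (Produces R)

/-- Chomsky normal form: every rule is `A → B C`, `A → a`, or `S → ε` with `S`
not occurring on the right-hand side of any rule. -/
def IsCNF {T N : Type} (S : N) (R : Set (N × List (GSym T N))) : Prop :=
  (∀ r ∈ R, (∃ B C : N, r.2 = [Sum.inr B, Sum.inr C]) ∨
      (∃ a : T, r.2 = [Sum.inl a]) ∨ (r.1 = S ∧ r.2 = [])) ∧
    ∀ r ∈ R, ∀ s ∈ r.2, s ≠ Sum.inr S

/-- Lifting a symbol of `G` to a symbol of `G'` (whose terminals are
`T ⊕ Unit`, the fresh terminal `ε'` being `Sum.inr ()`, and whose nonterminals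
are `N ⊕ Unit`, the fresh nonterminal `E` being `Sum.inr ()`). -/
def liftSym {T N : Type} : GSym T N → GSym (T ⊕ Unit) (N ⊕ Unit) :=
  Sum.map Sum.inl Sum.inl

/-- The rules of `G'`: the lifted rules of `G` together with `E → ε'` and
`A → E A`, `A → A E` for every nonterminal `A` of `G`. -/
def liftedRules {T N : Type} (R : Set (N × List (GSym T N))) :
    Set ((N ⊕ Unit) × List (GSym (T ⊕ Unit) (N ⊕ Unit))) :=
  ((fun r => (Sum.inl r.1, r.2.map liftSym)) '' R) ∪
    {(Sum.inr (), [Sum.inl (Sum.inr ())])} ∪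
    (⋃ A : N, {(Sum.inl A, [Sum.inr (Sum.inr ()), Sum.inr (Sum.inl A)]),
               (Sum.inl A, [Sum.inr (Sum.inl A), Sum.inr (Sum.inr ())])})

namespace Stmt12

variable {T N : Type}

/-! ### Generic derivation lemmas -/

lemma produces_ctx {R : Set (N × List (GSym T N))} {x y : List (GSym T N)}
    (h : Produces R x y) (l r : List (GSym T N)) :
    Produces R (l ++ x ++ r) (l ++ y ++ r) := by
  obtain ⟨rule, hr, p, q, h1, h2⟩ := h
  exact ⟨rule, hr, l ++ p, q ++ r, by subst h1; simp, by subst h2; simp⟩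

lemma derives_ctx {R : Set (N × List (GSym T N))} {x y : List (GSym T N)}
    (h : Derives R x y) (l r : List (GSym T N)) :
    Derives R (l ++ x ++ r) (l ++ y ++ r) := by
  induction h with
  | refl => exact Relation.ReflTransGen.refl
  | tail _ hs ih => exact ih.tail (produces_ctx hs l r)

lemma derives_append {R : Set (N × List (GSym T N))} {x x' y y' : List (GSym T N)}
    (h1 : Derives R x x') (h2 : Derives R y y') :
    Derives R (x ++ y) (x' ++ y') := by
  have a1 := derives_ctx h1 [] y
  have a2 := derives_ctx h2 x' []
  simp only [List.nil_append, List.append_nil] at a1 a2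
  exact a1.trans a2

/-! ### Counted derivations -/

inductive DerN (R : Set (N × List (GSym T N))) :
    ℕ → List (GSym T N) → List (GSym T N) → Prop
  | refl (x) : DerN R 0 x x
  | head {x y z : List (GSym T N)} {n : ℕ} :
      Produces R x y → DerN R n y z → DerN R (n + 1) x z

lemma DerN.derives {R : Set (N × List (GSym T N))} {n x y} (h : DerN R n x y) :
    Derives R x y := by
  induction h with
  | refl => exact Relation.ReflTransGen.refl
  | head hs _ ih => exact Relation.ReflTransGen.head hs ih

lemma DerN.tail {R : Set (N × List (GSym T N))} {n x y z} (h : DerN R n x y)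
    (hs : Produces R y z) : DerN R (n + 1) x z := by
  induction h with
  | refl => exact DerN.head hs (DerN.refl _)
  | head hs' _ ih => exact DerN.head hs' (ih hs)

lemma derives_iff_derN {R : Set (N × List (GSym T N))} {x y} :
    Derives R x y ↔ ∃ n, DerN R n x y := by
  constructor
  · intro h
    induction h with
    | refl => exact ⟨0, DerN.refl _⟩
    | tail _ hs ih => obtain ⟨n, hn⟩ := ih; exact ⟨n + 1, hn.tail hs⟩
  · rintro ⟨n, h⟩; exact h.derives

/-! ### Splitting -/

lemma produces_append_split {R : Set (N × List (GSym T N))} {x y v}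
    (h : Produces R (x ++ y) v) :
    (∃ x', v = x' ++ y ∧ Produces R x x') ∨
      (∃ y', v = x ++ y' ∧ Produces R y y') := by
  obtain ⟨rule, hr, p, q, h1, h2⟩ := h
  rw [List.append_assoc] at h1
  rw [List.append_eq_append_iff] at h1
  rcases h1 with ⟨a', hp, hy⟩ | ⟨c', hx, hq⟩
  · -- p = x ++ a', y = a' ++ ([A] ++ q) : the nonterminal is inside y
    refine Or.inr ⟨a' ++ rule.2 ++ q, ?_, rule, hr, a', q, by rw [hy]; simp, by simp⟩
    rw [h2, hp]; simp
  · -- x = p ++ c', [A] ++ q = c' ++ y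
    cases c' with
    | nil =>
      simp only [List.append_nil] at hx
      simp only [List.nil_append] at hq
      exact Or.inr ⟨rule.2 ++ q, by rw [h2, hx]; simp, rule, hr, [], q, by simp [hq.symm], by simp⟩
    | cons s c'' =>
      simp only [List.singleton_append, List.cons_append, List.cons.injEq] at hq
      obtain ⟨hs, hq'⟩ := hq
      simp only [List.nil_append] at hq'
      refine Or.inl ⟨p ++ rule.2 ++ c'', ?_, rule, hr, p, c'', by rw [hx, ← hs]; simp, by simp⟩
      rw [h2, hq']; simp

lemma derN_append_split {R : Set (N × List (GSym T N))} :
    ∀ {n x y z}, DerN R n (x ++ y) z →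
      ∃ n1 n2 x' y', n1 + n2 = n ∧ z = x' ++ y' ∧ DerN R n1 x x' ∧ DerN R n2 y y' := by
  intro n
  induction n with
  | zero =>
    intro x y z h
    cases h
    exact ⟨0, 0, x, y, rfl, rfl, DerN.refl _, DerN.refl _⟩
  | succ m ih =>
    intro x y z h
    cases h with
    | head hs ht =>
      rcases produces_append_split hs with ⟨x1, rfl, hpx⟩ | ⟨y1, rfl, hpy⟩
      · obtain ⟨n1, n2, x', y', hsum, rfl, d1, d2⟩ := ih ht
        exact ⟨n1 + 1, n2, x', y', by omega, rfl, DerN.head hpx d1, d2⟩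
      · obtain ⟨n1, n2, x', y', hsum, rfl, d1, d2⟩ := ih ht
        exact ⟨n1, n2 + 1, x', y', by omega, rfl, d1, DerN.head hpy d2⟩

/-! ### Lifting derivations of `G` into `G'` -/

lemma mem_lifted_of_mem {R : Set (N × List (GSym T N))} {r : N × List (GSym T N)}
    (hr : r ∈ R) : (Sum.inl r.1, r.2.map liftSym) ∈ liftedRules R :=
  Or.inl (Or.inl ⟨r, hr, rfl⟩)

lemma mem_lifted_eps {R : Set (N × List (GSym T N))} :
    ((Sum.inr () : N ⊕ Unit), [Sum.inl (Sum.inr ())]) ∈ liftedRules R :=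
  Or.inl (Or.inr rfl)

lemma mem_lifted_EA {R : Set (N × List (GSym T N))} (A : N) :
    ((Sum.inl A : N ⊕ Unit),
      [Sum.inr (Sum.inr ()), Sum.inr (Sum.inl A)]) ∈ liftedRules R :=
  Or.inr (Set.mem_iUnion.2 ⟨A, Or.inl rfl⟩)

lemma mem_lifted_AE {R : Set (N × List (GSym T N))} (A : N) :
    ((Sum.inl A : N ⊕ Unit),
      [Sum.inr (Sum.inl A), Sum.inr (Sum.inr ())]) ∈ liftedRules R :=
  Or.inr (Set.mem_iUnion.2 ⟨A, Or.inr rfl⟩)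

lemma produces_lift {R : Set (N × List (GSym T N))} {x y : List (GSym T N)}
    (h : Produces R x y) :
    Produces (liftedRules R) (x.map liftSym) (y.map liftSym) := by
  obtain ⟨rule, hr, p, q, h1, h2⟩ := h
  exact ⟨(Sum.inl rule.1, rule.2.map liftSym), mem_lifted_of_mem hr,
    p.map liftSym, q.map liftSym, by simp [h1, liftSym], by simp [h2]⟩

lemma derives_lift {R : Set (N × List (GSym T N))} {x y : List (GSym T N)}
    (h : Derives R x y) :
    Derives (liftedRules R) (x.map liftSym) (y.map liftSym) := by
  induction h with
  | refl => exact Relation.ReflTransGen.refl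
  | tail _ hs ih => exact ih.tail (produces_lift hs)

/-! ### Inserting `ε'` -/

lemma produces_single {R : Set (N × List (GSym T N))} {A : N} {w : List (GSym T N)}
    (h : (A, w) ∈ R) : Produces R [Sum.inr A] w :=
  ⟨(A, w), h, [], [], rfl, by simp⟩

lemma derives_eps_left {R : Set (N × List (GSym T N))} (A : N) (n : ℕ) :
    Derives (liftedRules R) [Sum.inr (Sum.inl A)]
      (List.replicate n (Sum.inl (Sum.inr ())) ++ [Sum.inr (Sum.inl A)]) := by
  induction n with
  | zero => simpa [Derives] using Relation.ReflTransGen.refl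
  | succ m ih =>
    refine Relation.ReflTransGen.head (produces_single (mem_lifted_EA A)) ?_
    have := derives_append
      (Relation.ReflTransGen.single (produces_single (mem_lifted_eps (R := R)))) ih
    simpa [Derives, List.replicate_succ] using this

lemma derives_eps_right {R : Set (N × List (GSym T N))} (A : N) (n : ℕ) :
    Derives (liftedRules R) [Sum.inr (Sum.inl A)]
      ([Sum.inr (Sum.inl A)] ++ List.replicate n (Sum.inl (Sum.inr ()))) := by
  induction n with
  | zero => simpa [Derives] using Relation.ReflTransGen.refl
  | succ m ih =>
    refine Relation.ReflTransGen.head (produces_single (mem_lifted_AE A)) ?_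
    have := derives_append ih
      (Relation.ReflTransGen.single (produces_single (mem_lifted_eps (R := R))))
    simpa [Derives, List.replicate_succ'] using this

/-! ### Strings of terminals are stuck -/

lemma derives_of_terminals {R : Set (N × List (GSym T N))} {w : List T} {y}
    (h : Derives R (w.map Sum.inl) y) : y = w.map Sum.inl := by
  rcases (Relation.ReflTransGen.cases_head h) with rfl | ⟨c, hc, _⟩
  · rfl
  · exfalso
    obtain ⟨rule, _, p, q, h1, _⟩ := hc
    have : (Sum.inr rule.1 : GSym T N) ∈ w.map Sum.inl := by
      rw [h1]; simp
    simp at this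

lemma derives_of_nil {R : Set (N × List (GSym T N))} {y}
    (h : Derives R [] y) : y = [] := by
  have := derives_of_terminals (w := ([] : List T)) (by simpa using h)
  simpa using this

/-! ### filterMap decompositions -/

lemma filterMap_split {α β : Type*} (f : α → Option β) :
    ∀ (u : List α) (w1 w2 : List β), u.filterMap f = w1 ++ w2 →
      ∃ u1 u2, u = u1 ++ u2 ∧ u1.filterMap f = w1 ∧ u2.filterMap f = w2 := by
  intro u
  induction u with
  | nil =>
    intro w1 w2 h
    simp only [List.filterMap_nil] at h
    obtain ⟨rfl, rfl⟩ := List.append_eq_nil_iff.1 h.symm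
    exact ⟨[], [], rfl, rfl, rfl⟩
  | cons a u ih =>
    intro w1 w2 h
    rcases hfa : f a with _ | b
    · rw [List.filterMap_cons_none hfa] at h
      obtain ⟨u1, u2, rfl, h1, h2⟩ := ih w1 w2 h
      exact ⟨a :: u1, u2, rfl, by rw [List.filterMap_cons_none hfa]; exact h1, h2⟩
    · rw [List.filterMap_cons_some hfa] at h
      cases w1 with
      | nil =>
        exact ⟨[], a :: u, rfl, rfl, by rw [List.filterMap_cons_some hfa]; simpa using h⟩
      | cons c w1' =>
        simp only [List.cons_append, List.cons.injEq] at h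
        obtain ⟨rfl, h'⟩ := h
        obtain ⟨u1, u2, rfl, h1, h2⟩ := ih w1' w2 h'
        exact ⟨a :: u1, u2, rfl, by rw [List.filterMap_cons_some hfa, h1], h2⟩

lemma all_eps_of_filterMap_nil :
    ∀ u : List (T ⊕ Unit), u.filterMap Sum.getLeft? = [] →
      u.map (Sum.inl : (T ⊕ Unit) → GSym (T ⊕ Unit) (N ⊕ Unit)) =
        List.replicate u.length (Sum.inl (Sum.inr ())) := by
  intro u
  induction u with
  | nil => intro _; rfl
  | cons a u ih =>
    intro h
    cases a with
    | inl t => simp at h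
    | inr _ =>
      rw [List.filterMap_cons_none Sum.getLeft?_inr] at h
      simp [List.replicate_succ, ih h]

lemma filterMap_singleton_decomp {a : T} :
    ∀ u : List (T ⊕ Unit), u.filterMap Sum.getLeft? = [a] →
      ∃ u1 u2 : List (T ⊕ Unit), u = u1 ++ Sum.inl a :: u2 ∧
        u1.filterMap Sum.getLeft? = [] ∧ u2.filterMap Sum.getLeft? = [] := by
  intro u
  induction u with
  | nil => intro h; simp at h
  | cons s u ih =>
    intro h
    cases s with
    | inl t =>
      rw [List.filterMap_cons_some Sum.getLeft?_inl] at h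
      simp only [List.cons.injEq] at h
      obtain ⟨rfl, h2⟩ := h
      exact ⟨[], u, rfl, rfl, h2⟩
    | inr _ =>
      rw [List.filterMap_cons_none Sum.getLeft?_inr] at h
      obtain ⟨u1, u2, rfl, h1, h2⟩ := ih h
      exact ⟨Sum.inr () :: u1, u2, rfl, by rw [List.filterMap_cons_none Sum.getLeft?_inr]; exact h1, h2⟩

/-! ### The backward direction -/

lemma singleton_step {R : Set (N × List (GSym T N))} {A : N} {y : List (GSym T N)}
    (hs : Produces R [Sum.inr A] y) : (A, y) ∈ R := by
  obtain ⟨⟨A', rhs⟩, hr, p, q, h1, h2⟩ := hs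
  cases p with
  | cons s p' =>
    exfalso
    simp only [List.cons_append, List.cons.injEq] at h1
    exact absurd h1.2.symm (by simp)
  | nil =>
    simp only [List.nil_append, List.singleton_append, List.cons.injEq,
      Sum.inr.injEq] at h1
    obtain ⟨hA, hq⟩ := h1
    subst hA
    rw [← hq] at h2
    simp only [List.append_nil, List.nil_append] at h2
    subst h2
    exact hr

lemma bw {S : N} {R : Set (N × List (GSym T N))} (hcnf : IsCNF S R) :
    ∀ n (A : N) (w : List T) (u : List (T ⊕ Unit)),
      DerN R n [Sum.inr A] (w.map Sum.inl) → u.filterMap Sum.getLeft? = w →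
      Derives (liftedRules R) [Sum.inr (Sum.inl A)] (u.map Sum.inl) := by
  intro n
  induction n using Nat.strong_induction_on with
  | _ n ih =>
    intro A w u hd hu
    generalize hzeq : List.map Sum.inl w = z at hd
    cases hd with
    | refl =>
      exfalso
      cases w <;> simp_all
    | head hs ht =>
      rename_i y m
      subst hzeq
      have hmem : (A, y) ∈ R := singleton_step hs
      rcases hcnf.1 (A, y) hmem with ⟨B, C, hBC⟩ | ⟨a, ha⟩ | ⟨_, hnil⟩
      · -- A → B C
        simp only at hBC
        subst hBC
        obtain ⟨n1, n2, z1, z2, hsum, hz, d1, d2⟩ :=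
          derN_append_split (x := [Sum.inr B]) (y := [Sum.inr C]) ht
        obtain ⟨w1, w2, rfl, hw1, hw2⟩ := List.map_eq_append_iff.1 hz
        obtain ⟨u1, u2, rfl, hu1, hu2⟩ := filterMap_split Sum.getLeft? u w1 w2 hu
        rw [← hw1] at d1
        rw [← hw2] at d2
        have e1 := ih n1 (by omega) B w1 u1 d1 hu1
        have e2 := ih n2 (by omega) C w2 u2 d2 hu2
        have hstep : Produces (liftedRules R) [Sum.inr (Sum.inl A)]
            [Sum.inr (Sum.inl B), Sum.inr (Sum.inl C)] :=
          produces_single (mem_lifted_of_mem (r := (A, [Sum.inr B, Sum.inr C])) hmem)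
        refine Relation.ReflTransGen.head hstep ?_
        have := derives_append e1 e2
        simpa [Derives] using this
      · -- A → a
        simp only at ha
        subst ha
        have hmap : List.map (Sum.inl : T → GSym T N) w = [Sum.inl a] := by
          exact derives_of_terminals (w := [a]) (by simpa using ht.derives)
        have hw' : w = [a] := by
          cases w with
          | nil => simp at hmap
          | cons t w' => simp_all
        subst hw'
        obtain ⟨u1, u2, rfl, hu1, hu2⟩ := filterMap_singleton_decomp u hu
        have He1 := all_eps_of_filterMap_nil (N := N) u1 hu1
        have He2 := all_eps_of_filterMap_nil (N := N) u2 hu2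
        have d1 := derives_eps_left (R := R) A u1.length
        have d2 := derives_ctx (derives_eps_right (R := R) A u2.length)
          (List.replicate u1.length (Sum.inl (Sum.inr ()))) []
        simp only [List.append_nil] at d2
        have d3 := d1.trans d2
        rw [← List.append_assoc] at d3
        have hstep := produces_ctx
          (produces_single (mem_lifted_of_mem (r := (A, [Sum.inl a])) hmem))
          (List.replicate u1.length (Sum.inl (Sum.inr ())))
          (List.replicate u2.length (Sum.inl (Sum.inr ())))
        have final := d3.tail hstep
        simpa [Derives, liftSym, He1, He2] using final
      · -- A → ε
        simp only at hnil
        subst hnil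
        have hw : w = [] := by
          have h0 := derives_of_nil ht.derives
          simpa using h0
        subst hw
        have He := all_eps_of_filterMap_nil (N := N) u hu
        have d1 := derives_eps_left (R := R) A u.length
        have hstep := produces_ctx
          (produces_single (mem_lifted_of_mem (r := (A, ([] : List (GSym T N)))) hmem))
          (List.replicate u.length (Sum.inl (Sum.inr ()))) []
        simp only [List.append_nil] at hstep
        have final := d1.tail hstep
        simpa [Derives, He] using final

/-! ### The forward direction -/

def strip {T N : Type} : GSym (T ⊕ Unit) (N ⊕ Unit) → Option (GSym T N)
  | Sum.inl (Sum.inl a) => some (Sum.inl a)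
  | Sum.inl (Sum.inr _) => none
  | Sum.inr (Sum.inl A) => some (Sum.inr A)
  | Sum.inr (Sum.inr _) => none

lemma strip_liftSym (s : GSym T N) : strip (liftSym s) = some s := by
  cases s <;> rfl

lemma filterMap_strip_map_liftSym (l : List (GSym T N)) :
    (l.map liftSym).filterMap strip = l := by
  rw [List.filterMap_map]
  have : (strip ∘ liftSym : GSym T N → Option (GSym T N)) = some := by
    funext s; exact strip_liftSym s
  rw [this, List.filterMap_some]

lemma fw_step {R : Set (N × List (GSym T N))}
    {x y : List (GSym (T ⊕ Unit) (N ⊕ Unit))}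
    (h : Produces (liftedRules R) x y) :
    Derives R (x.filterMap strip) (y.filterMap strip) := by
  obtain ⟨rule, hr, p, q, h1, h2⟩ := h
  subst h1 h2
  rcases hr with (⟨r, hrR, hre⟩ | he) | hins
  · -- lifted rule
    obtain ⟨hr1, hr2⟩ := Prod.mk.injEq _ _ _ _ ▸ hre
    refine Relation.ReflTransGen.single ?_
    refine ⟨r, hrR, p.filterMap strip, q.filterMap strip, ?_, ?_⟩
    · simp [← hr1, strip]
    · simp only [← hr2, List.filterMap_append, filterMap_strip_map_liftSym]
  · -- E → ε'
    rcases Set.mem_singleton_iff.1 he with rfl | _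
    simp [strip]
    exact Relation.ReflTransGen.refl
  · -- A → EA or A → AE
    simp only [Set.mem_iUnion] at hins
    obtain ⟨A, hA⟩ := hins
    rcases hA with h' | h' <;>
    · rcases h' with rfl | _
      simp [strip]
      exact Relation.ReflTransGen.refl

lemma fw {R : Set (N × List (GSym T N))}
    {x y : List (GSym (T ⊕ Unit) (N ⊕ Unit))}
    (h : Derives (liftedRules R) x y) :
    Derives R (x.filterMap strip) (y.filterMap strip) := by
  induction h with
  | refl => exact Relation.ReflTransGen.refl
  | tail _ hs ih => exact ih.trans (fw_step hs)

end Stmt12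

/-- for a CNF grammar `G = (N, Σ, P, S)` and the grammar `G'`
obtained by adding a fresh terminal `ε'`, a fresh nonterminal `E`, and the
rules `E → ε'`, `A → EA`, `A → AE` (for every `A ∈ N`), a word `u` over
`Σ ∪ {ε'}` lies in `L(G')` iff the word obtained from `u` by deleting all
occurrences of `ε'` lies in `L(G)`. -/
theorem stmt_12 (T N : Type) (S : N) (R : Set (N × List (GSym T N)))
    (hcnf : IsCNF S R) (u : List (T ⊕ Unit)) :
    Derives (liftedRules R) [Sum.inr (Sum.inl S)] (u.map Sum.inl) ↔
      Derives R [Sum.inr S]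
        ((u.filterMap (fun t => t.getLeft?)).map Sum.inl) := by
  constructor
  · intro h
    have h1 := Stmt12.fw h
    have e1 : ([Sum.inr (Sum.inl S)] : List (GSym (T ⊕ Unit) (N ⊕ Unit))).filterMap
        Stmt12.strip = [Sum.inr S] := rfl
    have e2 : (u.map Sum.inl).filterMap (Stmt12.strip (T := T) (N := N)) =
        (u.filterMap (fun t => t.getLeft?)).map Sum.inl := by
      rw [List.filterMap_map, List.map_filterMap]
      congr 1
      funext t
      cases t <;> rfl
    rwa [e1, e2] at h1
  · intro h
    obtain ⟨n, hn⟩ := Stmt12.derives_iff_derN.1 h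
    exact Stmt12.bw hcnf n S _ u hn rfl
end

section
/- Let P be the triangle-detection push-down system built from a graph on n vertices. Along any path in the configuration graph of P from (q_s, ε) to (q_t, ε), the stack depth never exceeds ⌈log₂ n⌉. -/
/-- along any path in the configuration graph of the
triangle-detection PDS from `(q_s, ε)` to `(q_t, ε)`, the stack depth never
exceeds `⌈log₂ n⌉`. -/
theorem stmt_15 (n : ℕ) (E : Fin n → Fin n → Prop)
    (c : Q9 n × List Bool)
    (h₁ : Relation.ReflTransGen (Step9 E) (.qs, []) c)
    (h₂ : Relation.ReflTransGen (Step9 E) c (.qt, [])) :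
    c.2.length ≤ Nat.clog 2 n := by
  have key : ∀ d : Q9 n × List Bool, Relation.ReflTransGen (Step9 E) (.qs, []) d →
      (d.1 = Q9.qs → d.2 = []) ∧ d.2.length ≤ Nat.clog 2 n := by
    intro d hd
    induction hd with
    | refl => exact ⟨fun _ => rfl, by simp⟩
    | tail _ hstep ih =>
      cases hstep with
      | push i s =>
        have hs : s = [] := ih.1 rfl
        subst hs
        refine ⟨(fun h => by cases h), ?_⟩
        simp [enc]
      | ab i j s h => exact ⟨(fun h => by cases h), ih.2⟩
      | bc i j s h => exact ⟨(fun h => by cases h), ih.2⟩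
      | cd i j s h => exact ⟨(fun h => by cases h), ih.2⟩
      | pop i s =>
        have := ih.2
        simp [enc] at this
        subst this
        exact ⟨fun _ => rfl, by simp⟩
  exact (key c h₁).2
end

section
/- In the AE-MonoΔ push-down system P, along any path in the configuration graph from a configuration (x_i, ε) to a configuration (y'_j, ε), the stack depth never exceeds 4⌈log₂ n⌉. -/

def Inv10 (n : ℕ) : Q10 n × List Bool → Prop
  | (.x _, s) => s.length = 0
  | (.y _, s) => s.length = 4 * Nat.clog 2 n
  | (.z _, s) => s.length = 4 * Nat.clog 2 n
  | (.x' _, s) => s.length = 2 * Nat.clog 2 n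
  | (.y' _, s) => s.length = 0

lemma encV_len (n m : ℕ) : (encV n m).length = Nat.clog 2 n := by
  simp [encV]

lemma encC_len (n m : ℕ) : (encC n m).length = 2 * Nat.clog 2 n := by
  simp [encC]

lemma inv_step {n : ℕ} {E : Fin n → Fin n → Prop} {c : Fin n → Fin n → ℕ}
    {a b : Q10 n × List Bool} (h : Step10 E c a b) (ha : Inv10 n a) : Inv10 n b := by
  cases h with
  | xy i j s _ =>
    simp only [Inv10] at ha ⊢
    simp [encV_len, encC_len, ha]; ring
  | yz i j s _ =>
    simpa only [Inv10] using ha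
  | zx' i j s _ =>
    simp only [Inv10, List.length_append, encC_len] at ha ⊢
    omega
  | x'y' i j s _ =>
    simp only [Inv10, List.length_append, encV_len] at ha ⊢
    omega

/-- along any path in the configuration graph of the AE-MonoΔ
PDS from a configuration `(x_i, ε)` to a configuration `(y'_j, ε)`, the stack
depth never exceeds `4⌈log₂ n⌉`. -/
theorem stmt_16 (n : ℕ) (E : Fin n → Fin n → Prop) (c : Fin n → Fin n → ℕ)
    (i j : Fin n) (cfg : Q10 n × List Bool)
    (h₁ : Relation.ReflTransGen (Step10 E c) (.x i, []) cfg)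
    (h₂ : Relation.ReflTransGen (Step10 E c) cfg (.y' j, [])) :
    cfg.2.length ≤ 4 * Nat.clog 2 n := by
  clear h₂
  have key : Inv10 n cfg := by
    induction h₁ with
    | refl => simp [Inv10]
    | tail _ h ih => exact inv_step h ih
  rcases cfg with ⟨q, s⟩
  cases q <;> simp only [Inv10] at key <;> simp only [key] <;> omega
end
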